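/- arXiv:1705.09464 — 3 statements merged into one kernel-verified Lean document; each statement's English description precedes it below -/
import Mathlib

section
/- (Matrix-Tree theorem) Let W = (w_{ij}) be a symmetric matrix of weights on vertex set V = {1,...,n}, and let Δ be its Laplacian, defined by Δ_{ij} = -w_{ij} for i ≠ j and Δ_{ii} = Σ_j w_{ij}. Then for any pair (u,v), the (u,v)-minor of Δ equals Σ_{T ∈ 𝒯} Π_{{i,j} ∈ E_T} w_{ij}, where 𝒯 is the set of spanning trees of the complete graph on V. In particular, all (u,v)-minors of Δ are equal. -/
/-
Write the Laplacian as `N D Nᵀ`, where `N` is the oriented incidence matrix of the complete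
graph (column `(a, b)` is `e_a - e_b`) and `D` is the diagonal of edge weights. Cauchy–Binet
expands the `(u, v)`-minor as a sum, over choices of `n - 1` edges, of their weight times the
minors of `N` obtained by deleting row `u`, resp. row `v`, and keeping the chosen columns. The
columns of `N` sum to zero, so `(-1)^u` times such a minor does not depend on `u`, and the
product of the two signed minors is a square. `N` is totally unimodular, and a reduced minor
vanishes exactly when the chosen edges do not connect the vertices; `n - 1` connecting edges
form a spanning tree.
-/

open scoped Classical

open Finset Matrix Nat

namespace Matrix

section CauchyBinet

variable {ι E R : Type*} [Fintype ι] [DecidableEq ι] [Fintype E] [CommRing R]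

theorem det_mul_eq_sum_prod_mul_det_submatrix (M : Matrix ι E R) (N : Matrix E ι R) :
    det (M * N) = ∑ p : ι → E, (∏ i, N (p i) i) * det (M.submatrix id p) := by
  simp only [det_apply', mul_apply, prod_univ_sum, Finset.mul_sum, submatrix_apply, id,
    Fintype.piFinset_univ]
  rw [Finset.sum_comm]
  refine Finset.sum_congr rfl fun p _ => Finset.sum_congr rfl fun σ _ => ?_
  rw [prod_mul_distrib]
  ring

/- Cauchy–Binet, summed over all column selections `p` rather than over `card ι`-subsets of `E`:
each subset is the image of `(card ι)!` injective `p`, and non-injective `p` contribute zero, so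
no enumeration of the subsets is needed. -/
theorem factorial_card_mul_det_mul (M : Matrix ι E R) (N : Matrix E ι R) :
    ((Fintype.card ι)! : R) * det (M * N)
      = ∑ p : ι → E, det (M.submatrix id p) * det (N.submatrix p id) := by
  have hperm (τ : Equiv.Perm ι) : det (M * N)
      = ∑ p : ι → E,
          (∏ i, N (p (τ i)) i) * (Equiv.Perm.sign τ * det (M.submatrix id p)) := by
    rw [det_mul_eq_sum_prod_mul_det_submatrix]
    refine (Fintype.sum_equiv (τ.symm.arrowCongr (Equiv.refl E)) _ _ fun p => ?_).symm
    change _ = (∏ i, N (p (τ i)) i) * det ((M.submatrix id p).submatrix id τ)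
    rw [det_permute']
  calc ((Fintype.card ι)! : R) * det (M * N) = ∑ τ : Equiv.Perm ι, det (M * N) := by
        simp [Fintype.card_perm]
    _ = ∑ p : ι → E, det (M.submatrix id p)
          * ∑ τ : Equiv.Perm ι, Equiv.Perm.sign τ * ∏ i, N (p (τ i)) i := by
        rw [Finset.sum_congr rfl fun τ _ => hperm τ, Finset.sum_comm]
        simp only [Finset.mul_sum]
        refine Finset.sum_congr rfl fun p _ => Finset.sum_congr rfl fun τ _ => ?_
        ring
    _ = _ := by simp [det_apply']

theorem factorial_card_mul_det_mul_diagonal_mul [DecidableEq E] (M : Matrix ι E R) (d : E → R)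
    (N : Matrix E ι R) :
    ((Fintype.card ι)! : R) * det (M * diagonal d * N)
      = ∑ p : ι → E, (∏ i, d (p i)) * det (M.submatrix id p) * det (N.submatrix p id) := by
  rw [factorial_card_mul_det_mul]
  refine Finset.sum_congr rfl fun p _ => ?_
  have : (M * diagonal d).submatrix id p = M.submatrix id p * diagonal (d ∘ p) := by
    ext i j
    simp
  rw [this, det_mul, det_diagonal]
  simp only [Function.comp_apply]
  ring

end CauchyBinet

variable {R : Type*} [CommRing R]

theorem det_eq_zero_of_sum_col_eq_zero [IsDomain R] {n : Type*} [Fintype n] [DecidableEq n]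
    [Nonempty n] {A : Matrix n n R} (h : ∀ j, ∑ i, A i j = 0) : det A = 0 :=
  exists_vecMul_eq_zero_iff.mp ⟨1, one_ne_zero, by ext j; simpa [vecMul, dotProduct] using h j⟩

theorem neg_one_pow_mul_det_submatrix_succAbove_eq [IsDomain R] {k : ℕ}
    {M : Matrix (Fin (k + 1)) (Fin k) R} (hM : ∀ j, ∑ i, M i j = 0) (u v : Fin (k + 1)) :
    (-1) ^ (u : ℕ) * det (M.submatrix u.succAbove id)
      = (-1) ^ (v : ℕ) * det (M.submatrix v.succAbove id) := by
  -- Border `M` by the column `e_u - e_v`: the result has zero column sums, hence determinant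
  -- zero, and its expansion along that column is the difference of the two sides.
  set x : Fin (k + 1) → R := Pi.single u 1 - Pi.single v 1
  set A : Matrix (Fin (k + 1)) (Fin (k + 1)) R :=
    of fun a => Fin.snoc (α := fun _ => R) (M a) (x a)
  have hA : det A = 0 := by
    refine det_eq_zero_of_sum_col_eq_zero fun j => Fin.lastCases ?_ (fun j => ?_) j
    · simp [A, x, Finset.sum_sub_distrib]
    · simpa [A] using hM j
  have hminor (a : Fin (k + 1)) :
      A.submatrix a.succAbove (Fin.last k).succAbove = M.submatrix a.succAbove id := by
    ext i j
    simp [A]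
  have hlast (a : Fin (k + 1)) : A a (Fin.last k) = x a := by simp [A]
  have hsq : ((-1 : R) ^ k) ^ 2 = 1 := by rw [← pow_mul, pow_mul']; simp
  rw [det_succ_column A (Fin.last k)] at hA
  simp only [hminor, hlast, x, Pi.sub_apply, Pi.single_apply, mul_sub, sub_mul,
    Finset.sum_sub_distrib, mul_ite, ite_mul, mul_one, mul_zero, zero_mul,
    Finset.sum_ite_eq', Finset.mem_univ, if_true, pow_add, Fin.val_last] at hA
  linear_combination (-1) ^ k * hA - ((-1) ^ (u : ℕ) * det (M.submatrix u.succAbove id)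
    - (-1) ^ (v : ℕ) * det (M.submatrix v.succAbove id)) * hsq

theorem insertNth_zero_vecMul {k : ℕ} {ι : Type*} (M : Matrix (Fin (k + 1)) ι R)
    (u : Fin (k + 1)) (y : Fin k → R) :
    Fin.insertNth u 0 y ᵥ* M = y ᵥ* M.submatrix u.succAbove id := by
  ext j
  simp [vecMul, dotProduct, Fin.sum_univ_succAbove _ u]

theorem det_submatrix_succAbove_eq_zero_iff [IsDomain R] {k : ℕ}
    (M : Matrix (Fin (k + 1)) (Fin k) R) (u : Fin (k + 1)) :
    det (M.submatrix u.succAbove id) = 0 ↔ ∃ y ≠ 0, y u = 0 ∧ y ᵥ* M = 0 := by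
  rw [← exists_vecMul_eq_zero_iff]
  constructor
  · rintro ⟨z, hz, hzM⟩
    refine ⟨Fin.insertNth u 0 z, fun h => hz ?_, by simp, by rwa [insertNth_zero_vecMul]⟩
    exact funext fun i => by simpa using congrFun h (u.succAbove i)
  · rintro ⟨y, hy, hyu, hyM⟩
    have hy' : y = Fin.insertNth u 0 (Fin.removeNth u y) := by
      rw [← hyu, Fin.insertNth_self_removeNth]
    refine ⟨Fin.removeNth u y, fun h => hy ?_, ?_⟩
    · rw [hy', h]
      simp
    · rwa [← insertNth_zero_vecMul, ← hy']

end Matrix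

namespace Finset

variable {α : Type*} [DecidableEq α] {k : ℕ} {S : Finset α}

theorem card_filter_image_eq_factorial [Fintype α] (hS : #S = k) :
    #{p : Fin k → α | univ.image p = S} = k ! := by
  have e : {p : Fin k → α // univ.image p = S} ≃ (Fin k ≃ S) :=
    { toFun p := Equiv.ofBijective
        (fun i => ⟨p.1 i, (Finset.ext_iff.mp p.2 _).mp (mem_image_of_mem _ (mem_univ i))⟩)
        ((Fintype.bijective_iff_surjective_and_card _).mpr ⟨fun s => by
          obtain ⟨i, -, hi⟩ := mem_image.mp ((Finset.ext_iff.mp p.2 s).mpr s.2)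
          exact ⟨i, Subtype.ext hi⟩, by simp [hS]⟩)
      invFun σ := ⟨fun i => σ i, by
        ext a
        simpa using
          ⟨fun ⟨i, hi⟩ => hi ▸ (σ i).2, fun ha => ⟨σ.symm ⟨a, ha⟩, by simp⟩⟩⟩
      left_inv _ := rfl
      right_inv _ := Equiv.ext fun _ => rfl }
  rw [← Fintype.card_subtype, Fintype.card_congr e,
    Fintype.card_equiv ((S.equivFin.trans (finCongr hS)).symm), Fintype.card_fin]

theorem prod_comp_of_image_eq {M : Type*} [CommMonoid M] (hS : #S = k) {p : Fin k → α}
    (hp : univ.image p = S) (f : α → M) : ∏ i, f (p i) = ∏ e ∈ S, f e := by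
  have hinj : Set.InjOn p (univ : Finset (Fin k)) := by
    rw [← Finset.card_image_iff, hp, hS, card_univ, Fintype.card_fin]
  rw [← hp, prod_image hinj]

end Finset

theorem SimpleGraph.Reachable.apply_eq {V β : Type*} {G : SimpleGraph V} {f : V → β}
    (hf : ∀ a b, G.Adj a b → f a = f b) {a b : V} (h : G.Reachable a b) : f a = f b := by
  obtain ⟨w⟩ := h
  induction w with
  | nil => rfl
  | cons hadj _ ih => exact (hf _ _ hadj).trans ih

namespace MatrixTree

variable {V R : Type*} [CommRing R]

section Incidence

variable [DecidableEq V]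

variable (V R) in
def incidence : Matrix V (V × V) R :=
  of fun a e => (if a = e.1 then 1 else 0) - (if a = e.2 then 1 else 0)

theorem incidence_apply (a : V) (e : V × V) :
    incidence V R a e = (if a = e.1 then 1 else 0) - (if a = e.2 then 1 else 0) := rfl

theorem vecMul_incidence [Fintype V] (y : V → R) (e : V × V) :
    (y ᵥ* incidence V R) e = y e.1 - y e.2 := by
  simp [vecMul, dotProduct, incidence_apply, mul_sub, Finset.sum_sub_distrib]

theorem sum_incidence_apply [Fintype V] (e : V × V) : ∑ a, incidence V R a e = 0 := by
  simp [incidence_apply, Finset.sum_sub_distrib]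

theorem incidence_isTotallyUnimodular [IsDomain R] : (incidence V R).IsTotallyUnimodular := by
  intro k f g hf hg
  induction k with
  | zero => exact ⟨1, by simp⟩
  | succ k ih =>
    set A := (incidence V R).submatrix f g
    have hsum (a : V) :
        ∑ i, (if f i = a then (1 : R) else 0) = if a ∈ Set.range f then 1 else 0 := by
      split_ifs with ha
      · obtain ⟨i0, rfl⟩ := ha
        simp [hf.eq_iff]
      · exact Finset.sum_eq_zero fun i _ => if_neg fun h => ha ⟨i, h⟩
    -- Either every column has both or neither endpoint among the rows, and the column sums
    -- vanish, or some column has a single nonzero entry, along which we expand.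
    by_cases hcols : ∀ j, ((g j).1 ∈ Set.range f ↔ (g j).2 ∈ Set.range f)
    · refine ⟨0, (det_eq_zero_of_sum_col_eq_zero fun j => ?_).symm⟩
      simp only [A, submatrix_apply, incidence_apply, Finset.sum_sub_distrib]
      simp_rw [hsum, hcols j, sub_self]
    push Not at hcols
    obtain ⟨j, hj⟩ := hcols
    obtain ⟨i0, s, hcol⟩ :
        ∃ i0, ∃ s : SignType, ∀ i, A i j = if i = i0 then (s : R) else 0 := by
      rcases hj with ⟨⟨i0, h1⟩, h2⟩ | ⟨h1, ⟨i0, h2⟩⟩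
      · refine ⟨i0, 1, fun i => ?_⟩
        have : f i ≠ (g j).2 := fun h => h2 ⟨i, h⟩
        simp [A, incidence_apply, this, ← h1, hf.eq_iff]
      · refine ⟨i0, -1, fun i => ?_⟩
        have : f i ≠ (g j).1 := fun h => h1 ⟨i, h⟩
        simp [A, incidence_apply, this, ← h2, hf.eq_iff, neg_ite]
    rw [det_succ_column A j, Fintype.sum_eq_single i0 fun i hi => by simp [hcol, hi], hcol,
      if_pos rfl]
    change _ ∈ MonoidHom.mrange SignType.castHom.toMonoidHom
    have hneg : (-1 : R) ∈ MonoidHom.mrange SignType.castHom.toMonoidHom := ⟨-1, by simp⟩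
    refine mul_mem (mul_mem (pow_mem hneg _) ⟨s, rfl⟩) ?_
    exact ih _ _ (hf.comp Fin.succAbove_right_injective) (hg.comp Fin.succAbove_right_injective)

end Incidence

def graphOf {ι : Type*} (p : ι → V × V) : SimpleGraph V :=
  SimpleGraph.fromRel fun a b => (a, b) ∈ Set.range p

section Minors

variable [IsDomain R] {k : ℕ} (p : Fin k → Fin (k + 1) × Fin (k + 1))

theorem det_incidence_submatrix_ne_zero_iff (u : Fin (k + 1)) :
    det ((incidence (Fin (k + 1)) R).submatrix u.succAbove p) ≠ 0 ↔ (graphOf p).Connected := by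
  have hker (y : Fin (k + 1) → R) :
      y ᵥ* (incidence _ R).submatrix id p = 0 ↔ ∀ j, y (p j).1 = y (p j).2 := by
    change (fun j => (y ᵥ* incidence _ R) (p j)) = 0 ↔ _
    simp [funext_iff, vecMul_incidence, sub_eq_zero]
  -- A left kernel vector is a potential on the vertices, vanishing at `u` and constant
  -- along the edges `p j`.
  change det (((incidence _ R).submatrix id p).submatrix u.succAbove id) ≠ 0 ↔ _
  simp only [Ne, det_submatrix_succAbove_eq_zero_iff, hker, not_exists, not_and]
  constructor
  · intro h
    by_contra hconn
    obtain ⟨x, hx⟩ : ∃ x, ¬ (graphOf p).Reachable u x := by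
      by_contra! hall
      exact hconn (SimpleGraph.connected_iff_exists_forall_reachable _ |>.mpr ⟨u, hall⟩)
    have hxu : ¬ (graphOf p).Reachable x u := fun h => hx h.symm
    refine h (fun a => if (graphOf p).Reachable x a then 1 else 0) (fun h0 => ?_) (by simp [hxu])
      fun j => ?_
    · simpa using congrFun h0 x
    · by_cases hj : (p j).1 = (p j).2
      · rw [hj]
      have hadj : (graphOf p).Adj (p j).1 (p j).2 := by
        simp only [graphOf, SimpleGraph.fromRel_adj]
        exact ⟨hj, Or.inl ⟨j, rfl⟩⟩
      have hreach : (graphOf p).Reachable x (p j).1 ↔ (graphOf p).Reachable x (p j).2 :=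
        ⟨fun h => h.trans hadj.reachable, fun h => h.trans hadj.symm.reachable⟩
      simp only [hreach]
  · intro hconn y hy hyu hyp
    refine hy (funext fun a => ?_)
    have hadj (a b : Fin (k + 1)) (h : (graphOf p).Adj a b) : y a = y b := by
      rcases ((SimpleGraph.fromRel_adj _ _ _).mp h).2 with ⟨j, hj⟩ | ⟨j, hj⟩
      · simpa [hj] using hyp j
      · simpa [hj] using (hyp j).symm
    rw [Pi.zero_apply, ← hyu]
    exact (hconn.preconnected a u).apply_eq hadj

theorem det_incidence_submatrix_sq (u : Fin (k + 1)) :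
    det ((incidence (Fin (k + 1)) R).submatrix u.succAbove p) ^ 2
      = if (graphOf p).Connected then 1 else 0 := by
  split_ifs with hconn
  · have hne := (det_incidence_submatrix_ne_zero_iff (R := R) p u).mpr hconn
    obtain ⟨s, hs⟩ := (isTotallyUnimodular_iff (incidence (Fin (k + 1)) R)).mp
      incidence_isTotallyUnimodular _ u.succAbove p
    rw [← hs] at hne ⊢
    cases s <;> simp at hne ⊢
  · rw [not_not.mp (mt (det_incidence_submatrix_ne_zero_iff (R := R) p u).mp hconn)]
    simp

theorem neg_one_pow_mul_det_incidence_submatrix (u v : Fin (k + 1)) :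
    (-1) ^ (u.val + v.val) * det ((incidence (Fin (k + 1)) R).submatrix u.succAbove p)
        * det ((incidence (Fin (k + 1)) R).submatrix v.succAbove p)
      = det ((incidence (Fin (k + 1)) R).submatrix (0 : Fin (k + 1)).succAbove p) ^ 2 := by
  have h (w : Fin (k + 1)) := neg_one_pow_mul_det_submatrix_succAbove_eq
    (M := (incidence _ R).submatrix id p) (fun j => sum_incidence_apply _) w 0
  simp only [submatrix_submatrix, Function.id_comp, Function.comp_id, Fin.val_zero, pow_zero,
    one_mul] at h
  linear_combination ((-1) ^ v.val * det ((incidence _ R).submatrix v.succAbove p)) * h u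
    + det ((incidence _ R).submatrix (0 : Fin (k + 1)).succAbove p) * h v

end Minors

section Laplacian

def laplacian [Fintype V] [DecidableEq V] (W : Matrix V V R) : Matrix V V R :=
  of fun i j => if i = j then ∑ k ∈ univ.erase i, W i k else -W i j

variable [LinearOrder V]

-- The edge `{i, j}`, `i < j`, of the complete graph is the column `(i, j)`; all other columns of
-- the incidence matrix get weight zero.
def orderedWeight (W : Matrix V V R) (e : V × V) : R :=
  if e.1 < e.2 then W e.1 e.2 else 0

theorem prod_orderedWeight {ι : Type*} [Fintype ι] (W : Matrix V V R) (p : ι → V × V) :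
    ∏ i, orderedWeight W (p i)
      = if ∀ i, (p i).1 < (p i).2 then ∏ i, W (p i).1 (p i).2 else 0 := by
  split_ifs with hp
  · exact prod_congr rfl fun i _ => if_pos (hp i)
  · push Not at hp
    obtain ⟨i, hi⟩ := hp
    exact prod_eq_zero (mem_univ i) (if_neg hi.not_gt)

theorem laplacian_eq_incidence_mul [Fintype V] [DecidableEq V] {W : Matrix V V R}
    (hW : W.IsSymm) :
    laplacian W = incidence V R * diagonal (orderedWeight W) * (incidence V R)ᵀ := by
  have hsym (x y : V) :
      orderedWeight W (x, y) + orderedWeight W (y, x) = if x = y then 0 else W x y := by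
    rcases lt_trichotomy x y with h | rfl | h
    · simp [orderedWeight, h, h.ne, not_lt_of_gt h]
    · simp [orderedWeight]
    · simp [orderedWeight, h, h.ne', not_lt_of_gt h, hW.apply]
  ext a b
  rw [mul_apply]
  simp only [mul_diagonal, laplacian, of_apply, transpose_apply, incidence_apply,
    Fintype.sum_prod_type, sub_mul, mul_sub, ite_mul, mul_ite, one_mul, mul_one, zero_mul,
    mul_zero, Finset.sum_sub_distrib, Finset.sum_ite_eq, mem_univ, if_true]
  by_cases hab : a = b
  · subst hab
    have hrow : ∑ k, (orderedWeight W (a, k) + orderedWeight W (k, a))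
        = ∑ k ∈ univ.erase a, W a k := by
      simp_rw [hsym]
      rw [sum_ite, sum_const_zero, zero_add, filter_ne]
    have hdiag : orderedWeight W (a, a) = 0 := by simp [orderedWeight]
    rw [if_pos rfl, ← hrow]
    simp [sum_add_distrib, hdiag]
  · simp [hab]
    linear_combination (hsym a b).trans (if_neg hab)

end Laplacian

section Trees

variable {ι : Type*} [Fintype V] [LinearOrder V]

noncomputable def edgePairs (G : SimpleGraph V) : Finset (V × V) :=
  univ.filter fun e => e.1 < e.2 ∧ G.Adj e.1 e.2

theorem natCard_edgeSet_eq_card_edgePairs (G : SimpleGraph V) :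
    Nat.card G.edgeSet = #(edgePairs G) := by
  have hset : G.edgeSet = (fun e : V × V => s(e.1, e.2)) '' ↑(edgePairs G) := by
    ext z
    induction z using Sym2.ind with
    | _ a b =>
      simp only [SimpleGraph.mem_edgeSet, edgePairs, coe_filter, mem_univ, true_and,
        Set.mem_image, Set.mem_ofPred_eq, Prod.exists]
      refine ⟨fun h => ?_, fun ⟨c, d, ⟨_, hcd⟩, he⟩ => ?_⟩
      · rcases lt_or_gt_of_ne h.ne with hab | hba
        · exact ⟨a, b, ⟨hab, h⟩, rfl⟩
        · exact ⟨b, a, ⟨hba, h.symm⟩, Sym2.eq_swap⟩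
      · rcases Sym2.eq_iff.mp he with ⟨rfl, rfl⟩ | ⟨rfl, rfl⟩
        exacts [hcd, hcd.symm]
  have hinj : Set.InjOn (fun e : V × V => s(e.1, e.2)) ↑(edgePairs G) := by
    rintro ⟨a, b⟩ hab ⟨c, d⟩ hcd he
    simp only [edgePairs, coe_filter, mem_univ, true_and, Set.mem_ofPred_eq] at hab hcd
    rcases Sym2.eq_iff.mp he with ⟨rfl, rfl⟩ | ⟨rfl, rfl⟩
    · rfl
    · exact absurd (hab.1.trans hcd.1) (lt_irrefl _)
  rw [Nat.card_coe_set_eq, hset, hinj.ncard_image, Set.ncard_coe_finset]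

theorem edgePairs_graphOf [Fintype ι] {p : ι → V × V} (hp : ∀ i, (p i).1 < (p i).2) :
    edgePairs (graphOf p) = univ.image p := by
  ext ⟨a, b⟩
  simp only [edgePairs, graphOf, SimpleGraph.fromRel_adj, mem_filter, mem_univ, true_and,
    mem_image, Set.mem_range]
  constructor
  · rintro ⟨hab, -, ⟨i, hi⟩ | ⟨i, hi⟩⟩
    · exact ⟨i, hi⟩
    · exact absurd hab (lt_asymm (by simpa [hi] using hp i))
  · rintro ⟨i, hi⟩
    have hab : a < b := by simpa [hi] using hp i
    exact ⟨hab, hab.ne, Or.inl ⟨i, hi⟩⟩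

theorem graphOf_eq_of_image_eq [Fintype ι] {p : ι → V × V} {G : SimpleGraph V}
    (h : univ.image p = edgePairs G) : graphOf p = G := by
  have hrange (e : V × V) : e ∈ Set.range p ↔ e.1 < e.2 ∧ G.Adj e.1 e.2 := by
    simpa [edgePairs] using Finset.ext_iff.mp h e
  ext a b
  simp only [graphOf, SimpleGraph.fromRel_adj, hrange]
  constructor
  · rintro ⟨-, ⟨-, h⟩ | ⟨-, h⟩⟩
    exacts [h, h.symm]
  · intro hab
    rcases lt_or_gt_of_ne hab.ne with h | h
    exacts [⟨hab.ne, Or.inl ⟨h, hab⟩⟩, ⟨hab.ne, Or.inr ⟨h, hab.symm⟩⟩]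

theorem card_edgePairs_of_isTree {k : ℕ} (hV : Fintype.card V = k + 1) {T : SimpleGraph V}
    (hT : T.IsTree) : #(edgePairs T) = k := by
  have := (SimpleGraph.isTree_iff_connected_and_card.mp hT).2
  rw [natCard_edgeSet_eq_card_edgePairs, Nat.card_eq_fintype_card, hV] at this
  omega

theorem isTree_graphOf {k : ℕ} (hV : Fintype.card V = k + 1) {p : Fin k → V × V}
    (hp : ∀ i, (p i).1 < (p i).2) (hconn : (graphOf p).Connected) : (graphOf p).IsTree := by
  have hle : #(edgePairs (graphOf p)) ≤ k := by
    rw [edgePairs_graphOf hp]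
    exact card_image_le.trans (by simp)
  have hge := hconn.card_vert_le_card_edgeSet_add_one
  rw [natCard_edgeSet_eq_card_edgePairs, Nat.card_eq_fintype_card, hV] at hge
  refine SimpleGraph.isTree_iff_connected_and_card.mpr ⟨hconn, ?_⟩
  rw [natCard_edgeSet_eq_card_edgePairs, Nat.card_eq_fintype_card, hV]
  omega

theorem sum_ite_connected_graphOf {S : Type*} [CommSemiring S] {k : ℕ}
    (hV : Fintype.card V = k + 1) (f : V × V → S) :
    ∑ p : Fin k → V × V,
        (if (∀ i, (p i).1 < (p i).2) ∧ (graphOf p).Connected then ∏ i, f (p i) else 0)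
      = k ! * ∑ T ∈ univ.filter SimpleGraph.IsTree, ∏ e ∈ edgePairs T, f e := by
  have hfiber (p : Fin k → V × V) :
      (if (∀ i, (p i).1 < (p i).2) ∧ (graphOf p).Connected then ∏ i, f (p i) else 0)
        = ∑ T ∈ univ.filter SimpleGraph.IsTree,
            if univ.image p = edgePairs T then ∏ i, f (p i) else 0 := by
    by_cases hc : (∀ i, (p i).1 < (p i).2) ∧ (graphOf p).Connected
    · rw [if_pos hc, sum_eq_single_of_mem (graphOf p)
        (by simpa using isTree_graphOf hV hc.1 hc.2)
        fun T _ hT => if_neg fun h => hT (graphOf_eq_of_image_eq h).symm,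
        if_pos (edgePairs_graphOf hc.1).symm]
    · rw [if_neg hc]
      refine (sum_eq_zero fun T hT => if_neg fun h => hc ⟨fun i => ?_, ?_⟩).symm
      · exact (mem_filter.mp (h ▸ mem_image_of_mem p (mem_univ i))).2.1
      · rw [graphOf_eq_of_image_eq h]
        exact (mem_filter.mp hT).2.connected
  calc _ = ∑ T ∈ univ.filter SimpleGraph.IsTree,
        ∑ p : Fin k → V × V, if univ.image p = edgePairs T then ∏ i, f (p i) else 0 := by
        rw [sum_congr rfl fun p _ => hfiber p, sum_comm]
    _ = ∑ T ∈ univ.filter SimpleGraph.IsTree, k ! * ∏ e ∈ edgePairs T, f e := by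
        refine sum_congr rfl fun T hT => ?_
        have hcard := card_edgePairs_of_isTree hV (mem_filter.mp hT).2
        rw [← sum_filter, sum_congr rfl fun p hp =>
          prod_comp_of_image_eq hcard (mem_filter.mp hp).2 f, sum_const,
          card_filter_image_eq_factorial hcard, nsmul_eq_mul]
    _ = _ := by rw [mul_sum]

end Trees

theorem neg_one_pow_mul_det_laplacian_submatrix [IsDomain R] [CharZero R] {k : ℕ}
    {W : Matrix (Fin (k + 1)) (Fin (k + 1)) R} (hW : W.IsSymm) (u v : Fin (k + 1)) :
    (-1) ^ (u.val + v.val) * det ((laplacian W).submatrix u.succAbove v.succAbove)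
      = ∑ T ∈ univ.filter SimpleGraph.IsTree, ∏ e ∈ edgePairs T, W e.1 e.2 := by
  have hminor : (laplacian W).submatrix u.succAbove v.succAbove
      = (incidence _ R).submatrix u.succAbove id * diagonal (orderedWeight W)
          * ((incidence _ R).submatrix v.succAbove id)ᵀ := by
    rw [laplacian_eq_incidence_mul hW]
    rfl
  have hCB := factorial_card_mul_det_mul_diagonal_mul ((incidence _ R).submatrix u.succAbove id)
    (orderedWeight W) ((incidence _ R).submatrix v.succAbove id)ᵀ
  rw [Fintype.card_fin, ← hminor] at hCB
  refine mul_left_cancel₀ (Nat.cast_ne_zero.mpr k.factorial_ne_zero : (k ! : R) ≠ 0) ?_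
  calc (k ! : R) * ((-1) ^ (u.val + v.val)
          * det ((laplacian W).submatrix u.succAbove v.succAbove))
      = ∑ p : Fin k → Fin (k + 1) × Fin (k + 1), (∏ i, orderedWeight W (p i))
          * ((-1) ^ (u.val + v.val) * det ((incidence _ R).submatrix u.succAbove p)
            * det ((incidence _ R).submatrix v.succAbove p)) := by
        rw [mul_left_comm, hCB, mul_sum]
        refine sum_congr rfl fun p _ => ?_
        rw [← det_transpose (((incidence _ R).submatrix v.succAbove id)ᵀ.submatrix p id)]
        simp only [transpose_submatrix, transpose_transpose, submatrix_submatrix,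
          Function.id_comp, Function.comp_id]
        ring
    _ = ∑ p : Fin k → Fin (k + 1) × Fin (k + 1),
          if (∀ i, (p i).1 < (p i).2) ∧ (graphOf p).Connected
          then ∏ i, W (p i).1 (p i).2 else 0 := by
        simp_rw [neg_one_pow_mul_det_incidence_submatrix, det_incidence_submatrix_sq,
          prod_orderedWeight, ite_zero_mul_ite_zero, mul_one]
    _ = _ := sum_ite_connected_graphOf (by simp) fun e => W e.1 e.2

end MatrixTree

/-- Matrix-Tree theorem: for a symmetric weight matrix `W` on `n ≥ 2` vertices
(here `n = m + 2`) with Laplacian `Δ` (`Δ_{ij} = -w_{ij}` for `i ≠ j`,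
`Δ_{ii} = Σ_{j≠i} w_{ij}`), every `(u,v)`-minor of `Δ` equals
`Σ_{T spanning tree} Π_{{i,j} ∈ E_T} w_{ij}`; in particular all minors are equal. -/
theorem matrix_tree_theorem (m : ℕ) (W : Matrix (Fin (m + 2)) (Fin (m + 2)) ℝ)
    (hW : W.IsSymm)
    (Δ : Matrix (Fin (m + 2)) (Fin (m + 2)) ℝ)
    (hΔ : ∀ i j, Δ i j = if i = j then ∑ k ∈ Finset.univ.erase i, W i k else -W i j) :
    ∀ u v : Fin (m + 2),
      (-1 : ℝ) ^ (u.val + v.val) * (Δ.submatrix u.succAbove v.succAbove).det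
        = ∑ T ∈ Finset.univ.filter (fun T : SimpleGraph (Fin (m + 2)) => T.IsTree),
            ∏ e ∈ Finset.univ.filter
                (fun e : Fin (m + 2) × Fin (m + 2) => e.1 < e.2 ∧ T.Adj e.1 e.2),
              W e.1 e.2 := by
  intro u v
  rw [show Δ = MatrixTree.laplacian W from Matrix.ext hΔ]
  exact MatrixTree.neg_one_pow_mul_det_laplacian_submatrix hW u v
end

section
/- Let G be a tree on vertex set O ∪ H with O, H disjoint, such that (i) no edge of G connects two vertices of H and (ii) every vertex h ∈ H has degree at least 3 in G. Let G_m be the graph on O obtained by marginalizing H, i.e., i,j ∈ O are adjacent in G_m iff they are adjacent in G or share a common neighbor in H. Then distinct hidden vertices h, h' ∈ H have neighborhoods N(h), N(h') ⊆ O that are distinct sets, and each N(h) forms a clique of size ≥ 3 in G_m. -/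
open Sum

/-- The marginal graph adjacency on the observed vertices `O`, obtained by
marginalizing the hidden vertices `H`: `i` and `j` are adjacent iff they are
adjacent in `G` or share a common hidden neighbor. -/
def marginalAdj {O H : Type*} (G : SimpleGraph (O ⊕ H)) (i j : O) : Prop :=
  G.Adj (inl i) (inl j) ∨ ∃ h : H, G.Adj (inr h) (inl i) ∧ G.Adj (inr h) (inl j)

namespace SimpleGraph

variable {V : Type*} {G : SimpleGraph V}

/-- Two common neighbours `a ≠ b` of `u ≠ v` would close the cycle `u a v b u`. -/
theorem IsAcyclic.commonNeighbors_subsingleton (hG : G.IsAcyclic) {u v : V} (huv : u ≠ v) :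
    (G.commonNeighbors u v).Subsingleton := by
  intro a ha b hb
  rw [mem_commonNeighbors] at ha hb
  have path_through {c : V} (huc : G.Adj u c) (hcv : G.Adj v c) :
      (Walk.cons huc (Walk.cons hcv.symm .nil)).IsPath := by
    simp [huv, huc.ne, hcv.ne']
  have hpaths := (hG.subsingleton_path u v).elim ⟨_, path_through ha.1 ha.2⟩
    ⟨_, path_through hb.1 hb.2⟩
  simpa using congrArg (fun p : G.Path u v => p.1.snd) hpaths

theorem IsAcyclic.eq_of_neighborSet_eq (hG : G.IsAcyclic) {u v : V}
    (huv : G.neighborSet u = G.neighborSet v) (hu : 1 < (G.neighborSet u).ncard) : u = v := by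
  by_contra hne
  have hcommon : G.commonNeighbors u v = G.neighborSet u := by
    rw [commonNeighbors, huv, Set.inter_self]
  have hfin := Set.finite_of_ncard_pos (zero_lt_one.trans hu)
  have := (Set.ncard_le_one hfin).mpr (hcommon ▸ hG.commonNeighbors_subsingleton hne)
  omega

end SimpleGraph

theorem hidden_neighborhoods_distinct_and_cliques_general
    {O H : Type*}
    (G : SimpleGraph (O ⊕ H)) (hG : G.IsTree)
    (hdeg : ∀ h : H, 3 ≤ (G.neighborSet (inr h)).ncard) :
    (∀ h h' : H, h ≠ h' → G.neighborSet (inr h) ≠ G.neighborSet (inr h')) ∧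
      ∀ h : H,
        3 ≤ (G.neighborSet (inr h)).ncard ∧
          ∀ i j : O, inl i ∈ G.neighborSet (inr h) → inl j ∈ G.neighborSet (inr h) →
            i ≠ j → marginalAdj G i j := by
  refine ⟨fun h h' hne hN => hne ?_, fun h => ⟨hdeg h, fun i j hi hj _ => .inr ⟨h, hi, hj⟩⟩⟩
  exact inr_injective (hG.isAcyclic.eq_of_neighborSet_eq hN (by linarith [hdeg h]))

/-- Let `G` be a tree on `O ∪ H` such that no edge joins two hidden vertices and
every hidden vertex has degree at least 3. Then distinct hidden vertices have
distinct neighborhoods, and the neighborhood of each hidden vertex forms a clique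
of size at least 3 in the marginal graph on `O`. -/
theorem hidden_neighborhoods_distinct_and_cliques
    {O H : Type*} [Fintype O] [Fintype H]
    (G : SimpleGraph (O ⊕ H)) (hG : G.IsTree)
    (hHH : ∀ h h' : H, ¬G.Adj (inr h) (inr h'))
    (hdeg : ∀ h : H, 3 ≤ (G.neighborSet (inr h)).ncard) :
    (∀ h h' : H, h ≠ h' → G.neighborSet (inr h) ≠ G.neighborSet (inr h')) ∧
      ∀ h : H,
        3 ≤ (G.neighborSet (inr h)).ncard ∧
          ∀ i j : O, inl i ∈ G.neighborSet (inr h) → inl j ∈ G.neighborSet (inr h) →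
            i ≠ j → marginalAdj G i j :=
  hidden_neighborhoods_distinct_and_cliques_general G hG hdeg
end

section
/- For a, c > 0 and b ∈ R with ac - b² > 0, consider f(x) = (n/2) log((a c - x²)/(a c)) - n x b as a function of x on the interval (-√(ac), √(ac)) with b ≠ 0. Then f attains its unique maximum at x* = (1 - √(1 + 4 b² a c)) / (2b). -/
open Real

/-- M-step scalar optimization (observed–observed case): for `a, c > 0`, `b ≠ 0` with
`ac - b² > 0` and `n > 0`, the function
`f(x) = (n/2) log((ac - x²)/(ac)) - n x b` on `(-√(ac), √(ac))` attains its unique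
maximum at `x* = (1 - √(1 + 4 b² a c)) / (2b)`. -/
theorem mstep_observed_unique_max (n a b c : ℝ) (hn : 0 < n) (ha : 0 < a) (hc : 0 < c)
    (hb : b ≠ 0) (hacb : a * c - b ^ 2 > 0) :
    (1 - Real.sqrt (1 + 4 * b ^ 2 * a * c)) / (2 * b)
        ∈ Set.Ioo (-Real.sqrt (a * c)) (Real.sqrt (a * c)) ∧
      ∀ x ∈ Set.Ioo (-Real.sqrt (a * c)) (Real.sqrt (a * c)),
        x ≠ (1 - Real.sqrt (1 + 4 * b ^ 2 * a * c)) / (2 * b) →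
          n / 2 * Real.log ((a * c - x ^ 2) / (a * c)) - n * x * b
            < n / 2 * Real.log
                ((a * c - ((1 - Real.sqrt (1 + 4 * b ^ 2 * a * c)) / (2 * b)) ^ 2)
                  / (a * c))
              - n * ((1 - Real.sqrt (1 + 4 * b ^ 2 * a * c)) / (2 * b)) * b := by
  have hac : 0 < a * c := mul_pos ha hc
  have hb2 : 0 < b ^ 2 := by positivity
  set s : ℝ := Real.sqrt (1 + 4 * b ^ 2 * a * c) with hs
  have hsnn : (0:ℝ) ≤ 1 + 4 * b ^ 2 * a * c := by positivity
  have hs2 : s ^ 2 = 1 + 4 * b ^ 2 * a * c := Real.sq_sqrt hsnn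
  have hs1 : 1 < s := by
    nlinarith [Real.sqrt_nonneg (1 + 4 * b ^ 2 * a * c), hs2, mul_pos hb2 hac]
  set t : ℝ := (1 - s) / (2 * b) with ht
  have htb : t * b = (1 - s) / 2 := by rw [ht]; field_simp
  have htb' : t * b < 0 := by rw [htb]; linarith
  have hroot : b * (a * c - t ^ 2) = -t := by
    rw [ht]; field_simp; nlinarith [hs2]
  have hdt : 0 < a * c - t ^ 2 := by
    have h2 : b * (b * (a * c - t ^ 2)) = b * (-t) := by rw [hroot]
    nlinarith [h2, htb', hb2]
  have htmem : t ∈ Set.Ioo (-Real.sqrt (a * c)) (Real.sqrt (a * c)) := by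
    have habs : |t| < Real.sqrt (a * c) := by
      rw [← Real.sqrt_sq_eq_abs]
      exact Real.sqrt_lt_sqrt (sq_nonneg t) (by linarith)
    exact ⟨neg_lt_of_abs_lt habs, lt_of_abs_lt habs⟩
  refine ⟨htmem, fun x hx hxt => ?_⟩
  have hdx : 0 < a * c - x ^ 2 := by
    have h1 : x ^ 2 < Real.sqrt (a * c) ^ 2 := sq_lt_sq' hx.1 hx.2
    rw [Real.sq_sqrt hac.le] at h1
    linarith
  have key : Real.log ((a * c - x ^ 2) / (a * c - t ^ 2)) < 2 * (x - t) * b := by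
    by_cases hsq : x ^ 2 = t ^ 2
    · have hxn : x = -t := by
        rcases sq_eq_sq_iff_eq_or_eq_neg.mp hsq with h | h
        · exact absurd h hxt
        · exact h
      rw [hsq, div_self hdt.ne', Real.log_one, hxn]
      nlinarith [htb']
    · have h1 : Real.log ((a * c - x ^ 2) / (a * c - t ^ 2))
          < (a * c - x ^ 2) / (a * c - t ^ 2) - 1 := by
        apply Real.log_lt_sub_one_of_pos (by positivity)
        intro h
        apply hsq
        have := (div_eq_one_iff_eq hdt.ne').mp h
        linarith
      have h2 : (a * c - x ^ 2) / (a * c - t ^ 2) - 1 ≤ 2 * (x - t) * b := by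
        have hr2 : 2 * (x - t) * (b * (a * c - t ^ 2)) = 2 * (x - t) * (-t) := by
          rw [hroot]
        rw [sub_le_iff_le_add, div_le_iff₀ hdt]
        nlinarith [hr2, sq_nonneg (x - t)]
      linarith
  have hfin := mul_lt_mul_of_pos_left key (show (0:ℝ) < n / 2 by linarith)
  rw [Real.log_div hdx.ne' hdt.ne'] at hfin
  rw [Real.log_div hdx.ne' hac.ne', Real.log_div hdt.ne' hac.ne']
  nlinarith [hfin]
end
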